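/- Let p be a prime, ζ a primitive p-th root of unity in Z̄_p, and λ = ζ − 1. Fix s in the ring of integers of Q̄_p and define f̃_s(z) = ((λz + s)^p − s^p)/λ^p ∈ Q̄_p[z]. Then f̃_s has integral coefficients, and its reduction modulo the maximal ideal is z^p − c·z, where c is the reduction of s^{p-1}. -/

import Mathlib

/-!
Expanding binomially, the coefficient of `z^i` in `f̃_s` is `C(p,i) λ^(i-p) s^(p-i)`. Since
`p = ∏_{0<k<p} (1 - ζ^k)` and each factor is divisible by `λ`, we have `p = λ^(p-1) u` with `u`
integral, so for `0 < i < p` the coefficient is `λ^(i-1) u (C(p,i)/p) s^(p-i)`: the middle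
coefficients are divisible by `λ` and the linear one is `u s^(p-1)`. Finally `u ≡ -1 (mod λ)`
because `f̃_1(1) = ((λ + 1)^p - 1)/λ^p = 0`.
-/

open Polynomial

theorem IsPrimitiveRoot.exists_mem_integralClosure_natCast_eq_sub_one_pow_mul
    {R K : Type*} [CommRing R] [CommRing K] [IsDomain K] [Algebra R K] {ζ : K} {p : ℕ}
    (hζ : IsPrimitiveRoot ζ p) (hp : 0 < p) :
    ∃ u ∈ integralClosure R K, (p : K) = (ζ - 1) ^ (p - 1) * u := by
  obtain ⟨u, hu, hpu⟩ := hζ.self_sub_one_pow_dvd_order (Nat.sub_lt hp one_pos)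
  have hint : IsIntegral ℤ u := adjoin_le_integralClosure (hζ.isIntegral hp) hu
  exact ⟨u, hint.tower_top, hpu.trans (mul_comm _ _)⟩

section

variable {K : Type*} [Field K]

noncomputable def normalizedPowDiff (p : ℕ) (lam s : K) : K[X] :=
  C (lam ^ p)⁻¹ * ((C lam * X + C s) ^ p - C (s ^ p))

theorem coeff_normalizedPowDiff (p : ℕ) (lam s : K) (i : ℕ) :
    (normalizedPowDiff p lam s).coeff i =
      (lam ^ p)⁻¹ * ((s ^ (p - i) * p.choose i - if i = 0 then s ^ p else 0) * lam ^ i) := by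
  have : (C lam * X + C s) ^ p - C (s ^ p) = ((X + C s) ^ p - C (s ^ p)).comp (C lam * X) := by
    simp
  rw [normalizedPowDiff, this, coeff_C_mul, comp_C_mul_X_coeff, coeff_sub, coeff_X_add_C_pow,
    coeff_C]

theorem natDegree_normalizedPowDiff_le (p : ℕ) (lam s : K) :
    (normalizedPowDiff p lam s).natDegree ≤ p := by
  unfold normalizedPowDiff; compute_degree

theorem coeff_zero_normalizedPowDiff (p : ℕ) (lam s : K) :
    (normalizedPowDiff p lam s).coeff 0 = 0 := by
  simp [coeff_normalizedPowDiff]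

theorem coeff_self_normalizedPowDiff {p : ℕ} (hp : p ≠ 0) {lam : K} (hlam : lam ≠ 0) (s : K) :
    (normalizedPowDiff p lam s).coeff p = 1 := by
  simp [coeff_normalizedPowDiff, hp, hlam]

variable {p : ℕ} {lam u : K}

theorem coeff_normalizedPowDiff_of_pos_of_lt (hp : p.Prime) (hlam : lam ≠ 0)
    (hpu : (p : K) = lam ^ (p - 1) * u) (s : K) {i : ℕ} (hi0 : 0 < i) (hip : i < p) :
    (normalizedPowDiff p lam s).coeff i =
      lam ^ (i - 1) * (u * (p.choose i / p : ℕ) * s ^ (p - i)) := by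
  have hchoose : (p.choose i : K) = lam ^ (p - 1) * u * (p.choose i / p : ℕ) := by
    rw [← hpu, ← Nat.cast_mul, Nat.mul_div_cancel' (hp.dvd_choose_self hi0.ne' hip)]
  have hpow : lam ^ (p - 1) * lam ^ i = lam ^ p * lam ^ (i - 1) := by
    rw [← pow_add, ← pow_add]; congr 1; omega
  rw [coeff_normalizedPowDiff, if_neg hi0.ne', sub_zero, hchoose]
  field_simp
  linear_combination (u * (p.choose i / p : ℕ) * s ^ (p - i)) * hpow

theorem coeff_one_normalizedPowDiff (hp : p.Prime) (hlam : lam ≠ 0)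
    (hpu : (p : K) = lam ^ (p - 1) * u) (s : K) :
    (normalizedPowDiff p lam s).coeff 1 = u * s ^ (p - 1) := by
  rw [coeff_normalizedPowDiff_of_pos_of_lt hp hlam hpu s one_pos hp.one_lt]
  simp [Nat.div_self hp.pos]

variable {S : Type*} [SetLike S K] [SubringClass S K] {O : S}

theorem exists_coeff_normalizedPowDiff_eq_mul (hp : p.Prime) (hlam : lam ≠ 0)
    (hpu : (p : K) = lam ^ (p - 1) * u) (hlamO : lam ∈ O) (huO : u ∈ O) {s : K} (hs : s ∈ O)
    {i : ℕ} (hi2 : 2 ≤ i) (hip : i < p) :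
    ∃ w ∈ O, (normalizedPowDiff p lam s).coeff i = lam * w := by
  refine ⟨lam ^ (i - 2) * (u * (p.choose i / p : ℕ) * s ^ (p - i)), ?_, ?_⟩
  · exact mul_mem (pow_mem hlamO _) (mul_mem (mul_mem huO (natCast_mem O _)) (pow_mem hs _))
  · rw [coeff_normalizedPowDiff_of_pos_of_lt hp hlam hpu s (by omega) hip,
      show i - 1 = i - 2 + 1 by omega, pow_succ']
    ring

theorem coeff_normalizedPowDiff_mem (hp : p.Prime) (hlam : lam ≠ 0)
    (hpu : (p : K) = lam ^ (p - 1) * u) (hlamO : lam ∈ O) (huO : u ∈ O) {s : K} (hs : s ∈ O)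
    (i : ℕ) : (normalizedPowDiff p lam s).coeff i ∈ O := by
  rcases Nat.eq_zero_or_pos i with rfl | hi0
  · simp [coeff_zero_normalizedPowDiff]
  rcases lt_trichotomy i p with hip | rfl | hpi
  · rw [coeff_normalizedPowDiff_of_pos_of_lt hp hlam hpu s hi0 hip]
    exact mul_mem (pow_mem hlamO _) (mul_mem (mul_mem huO (natCast_mem O _)) (pow_mem hs _))
  · simp [coeff_self_normalizedPowDiff hp.ne_zero hlam]
  · simp [coeff_eq_zero_of_natDegree_lt ((natDegree_normalizedPowDiff_le p lam s).trans_lt hpi)]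

theorem exists_add_one_eq_mul_of_add_one_pow_eq_one (hp : p.Prime) (hlam : lam ≠ 0) (hroot : (lam + 1) ^ p = 1)
    (hpu : (p : K) = lam ^ (p - 1) * u) (hlamO : lam ∈ O) (huO : u ∈ O) :
    ∃ v ∈ O, u + 1 = lam * v := by
  set g := normalizedPowDiff p lam 1
  have heval : g.eval 1 = 0 := by simp [g, normalizedPowDiff, hroot]
  have hsum : g.eval 1 = u + (∑ i ∈ Finset.Ico 2 p, g.coeff i) + 1 := by
    rw [eval_eq_sum_range' (Nat.lt_succ_of_le (natDegree_normalizedPowDiff_le p lam 1)),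
      Finset.sum_range_succ, Finset.range_eq_Ico, Finset.sum_eq_sum_Ico_succ_bot hp.pos,
      Finset.sum_eq_sum_Ico_succ_bot hp.one_lt]
    simp [g, coeff_zero_normalizedPowDiff, coeff_one_normalizedPowDiff hp hlam hpu,
      coeff_self_normalizedPowDiff hp.ne_zero hlam]
  obtain ⟨w, hwO, hw⟩ : ∃ w ∈ O, ∑ i ∈ Finset.Ico 2 p, g.coeff i = lam * w := by
    refine Finset.sum_induction _ (fun x => ∃ w ∈ O, x = lam * w) ?_ ⟨0, zero_mem O, by simp⟩ ?_
    · rintro _ _ ⟨w₁, hw₁, rfl⟩ ⟨w₂, hw₂, rfl⟩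
      exact ⟨w₁ + w₂, add_mem hw₁ hw₂, by ring⟩
    · intro i hi
      rw [Finset.mem_Ico] at hi
      exact exists_coeff_normalizedPowDiff_eq_mul hp hlam hpu hlamO huO (one_mem O) hi.1 hi.2
  exact ⟨-w, neg_mem hwO, by linear_combination hsum.symm.trans heval - hw⟩

end

theorem lift_reduces_to_additive (p : ℕ) [hp : Fact p.Prime]
    (ζ : AlgebraicClosure ℚ_[p]) (hζ : IsPrimitiveRoot ζ p)
    (lam : AlgebraicClosure ℚ_[p]) (hlam : lam = ζ - 1)
    (s : AlgebraicClosure ℚ_[p])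
    (hs : s ∈ integralClosure ℤ_[p] (AlgebraicClosure ℚ_[p]))
    (f : (AlgebraicClosure ℚ_[p])[X])
    (hf : f = C (lam ^ p)⁻¹ * ((C lam * X + C s) ^ p - C (s ^ p))) :
    (∀ i, f.coeff i ∈ integralClosure ℤ_[p] (AlgebraicClosure ℚ_[p])) ∧
    f.coeff p = 1 ∧
    f.coeff 0 = 0 ∧
    (∃ u ∈ integralClosure ℤ_[p] (AlgebraicClosure ℚ_[p]),
      f.coeff 1 + s ^ (p - 1) = lam * u) ∧
    (∀ i, 2 ≤ i → i ≤ p - 1 →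
      ∃ u ∈ integralClosure ℤ_[p] (AlgebraicClosure ℚ_[p]), f.coeff i = lam * u) := by
  have hp0 : 0 < p := hp.out.pos
  have hlam0 : lam ≠ 0 := hlam ▸ sub_ne_zero.mpr (hζ.ne_one hp.out.one_lt)
  have hroot : (lam + 1) ^ p = 1 := by rw [hlam, sub_add_cancel, hζ.pow_eq_one]
  have hlamO : lam ∈ integralClosure ℤ_[p] (AlgebraicClosure ℚ_[p]) :=
    hlam ▸ sub_mem (hζ.isIntegral hp0).tower_top (one_mem _)
  obtain ⟨u, huO, hpu⟩ := hζ.exists_mem_integralClosure_natCast_eq_sub_one_pow_mul (R := ℤ_[p]) hp0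
  rw [← hlam] at hpu
  obtain ⟨v, hvO, huv⟩ := exists_add_one_eq_mul_of_add_one_pow_eq_one hp.out hlam0 hroot hpu hlamO huO
  change f = normalizedPowDiff p lam s at hf
  subst hf
  refine ⟨coeff_normalizedPowDiff_mem hp.out hlam0 hpu hlamO huO hs,
    coeff_self_normalizedPowDiff hp.out.ne_zero hlam0 s, coeff_zero_normalizedPowDiff p lam s,
    ⟨v * s ^ (p - 1), mul_mem hvO (pow_mem hs _), ?_⟩,
    fun i hi2 hip => exists_coeff_normalizedPowDiff_eq_mul hp.out hlam0 hpu hlamO huO hs hi2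
      (by omega)⟩
  rw [coeff_one_normalizedPowDiff hp.out hlam0 hpu]
  linear_combination s ^ (p - 1) * huv
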